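/- arXiv:2410.02509 — 4 statements merged into one kernel-verified Lean document; each statement's English description precedes it below -/
import Mathlib

section
/- Suppose h(t,θ) evolves by h_t = h - k and k(t,θ) → 1 uniformly as t → ∞, with h, k smooth and positive and ∫₀^{2π} h(t,θ)/k(t,θ) dθ = 2π for all t (constant enclosed area π). Then w(t) = ∫₀^{2π} log h(t,θ) dθ satisfies w'(t) = -∫₀^{2π} (h(t,θ)-k(t,θ))²/(h(t,θ)k(t,θ)) dθ ≤ 0, so w is non-increasing. -/
open Real Filter Metric intervalIntegral

/-- Under the normalized curve shortening flow (`h_t = h - k`, curvature `k → 1`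
uniformly, constant enclosed area `π`, i.e. `∫₀^{2π} h/k dθ = 2π`), the quantity
`w(t) = ∫₀^{2π} log h(t,θ) dθ` satisfies
`w'(t) = -∫₀^{2π} (h-k)²/(hk) dθ ≤ 0`; in particular `w` is non-increasing. -/
theorem entropy_like_quantity_monotone
    (h k : ℝ → ℝ → ℝ)
    (hh : ContDiff ℝ (⊤ : ℕ∞) (Function.uncurry h))
    (hkc : ContDiff ℝ (⊤ : ℕ∞) (Function.uncurry k))
    (hpos : ∀ t θ, 0 < h t θ) (hkpos : ∀ t θ, 0 < k t θ)
    (hper : ∀ t θ, h t (θ + 2 * π) = h t θ)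
    (hkper : ∀ t θ, k t (θ + 2 * π) = k t θ)
    (hflow : ∀ t θ, HasDerivAt (fun s => h s θ) (h t θ - k t θ) t)
    (hkunif : TendstoUniformly (fun t θ => k t θ) (fun _ => 1) atTop)
    (harea : ∀ t, ∫ θ in (0:ℝ)..(2 * π), h t θ / k t θ = 2 * π)
    (w : ℝ → ℝ)
    (hw : ∀ t, w t = ∫ θ in (0:ℝ)..(2 * π), Real.log (h t θ)) :
    (∀ t, HasDerivAt w
        (-∫ θ in (0:ℝ)..(2 * π), (h t θ - k t θ) ^ 2 / (h t θ * k t θ)) t ∧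
      (-∫ θ in (0:ℝ)..(2 * π), (h t θ - k t θ) ^ 2 / (h t θ * k t θ)) ≤ 0) ∧
      Antitone w := by
  have hc : Continuous (Function.uncurry h) := hh.continuous
  have hkcc : Continuous (Function.uncurry k) := hkc.continuous
  have hcs : ∀ t, Continuous (fun θ => h t θ) := fun t =>
    hc.comp (continuous_const.prodMk continuous_id)
  have hks : ∀ t, Continuous (fun θ => k t θ) := fun t =>
    hkcc.comp (continuous_const.prodMk continuous_id)
  have hwe : w = fun t => ∫ θ in (0:ℝ)..(2 * π), Real.log (h t θ) := funext hw
  have hpi : (0:ℝ) < 2 * π := by positivity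
  -- integrability helpers
  have Ihk : ∀ t, IntervalIntegrable (fun θ => h t θ / k t θ) MeasureTheory.volume 0 (2*π) :=
    fun t => ( (hcs t).div (hks t) (fun θ => (hkpos t θ).ne')).intervalIntegrable _ _
  have Ikh : ∀ t, IntervalIntegrable (fun θ => k t θ / h t θ) MeasureTheory.volume 0 (2*π) :=
    fun t => ( (hks t).div (hcs t) (fun θ => (hpos t θ).ne')).intervalIntegrable _ _
  have main : ∀ t, HasDerivAt w
      (-∫ θ in (0:ℝ)..(2 * π), (h t θ - k t θ) ^ 2 / (h t θ * k t θ)) t := by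
    intro t
    -- compact bound
    obtain ⟨C, hC⟩ : ∃ C, ∀ p ∈ (Set.Icc (t-1) (t+1) ×ˢ Set.Icc (0:ℝ) (2*π)),
        ‖(h p.1 p.2 - k p.1 p.2) / h p.1 p.2‖ ≤ C := by
      have hcompact : IsCompact (Set.Icc (t-1) (t+1) ×ˢ Set.Icc (0:ℝ) (2*π)) :=
        (isCompact_Icc).prod isCompact_Icc
      refine hcompact.exists_bound_of_continuousOn ?_
      exact ((hc.sub hkcc).div hc (fun p => (hpos p.1 p.2).ne')).continuousOn
    have key := intervalIntegral.hasDerivAt_integral_of_dominated_loc_of_deriv_le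
      (F := fun x θ => Real.log (h x θ)) (F' := fun x θ => (h x θ - k x θ) / h x θ)
      (μ := MeasureTheory.volume) (a := 0) (b := 2*π) (x₀ := t) (bound := fun _ => C) (s := ball t 1) (ball_mem_nhds t one_pos)
      (Filter.Eventually.of_forall fun x =>
        (((hcs x).log (fun θ => (hpos x θ).ne')).aestronglyMeasurable))
      (((hcs t).log (fun θ => (hpos t θ).ne')).intervalIntegrable _ _)
      (((((hcs t).sub (hks t)).div (hcs t) (fun θ => (hpos t θ).ne')).aestronglyMeasurable))
      (Filter.Eventually.of_forall fun θ hθ x hx => by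
        refine hC (x, θ) ?_
        constructor
        · simp only [Set.mem_Icc]
          have := mem_ball_iff_norm.mp hx
          rw [Real.norm_eq_abs, abs_lt] at this
          constructor <;> linarith [this.1, this.2]
        · rcases Set.mem_Ioc.mp ((Set.uIoc_of_le hpi.le) ▸ hθ) with ⟨h1, h2⟩
          exact ⟨h1.le, h2⟩)
      (intervalIntegrable_const)
      (Filter.Eventually.of_forall fun θ _ x _ =>
        (hflow x θ).log (hpos x θ).ne')
    have hd := key.2
    -- rewrite derivative value
    have hval : (∫ θ in (0:ℝ)..(2*π), (h t θ - k t θ) / h t θ)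
        = -∫ θ in (0:ℝ)..(2*π), (h t θ - k t θ) ^ 2 / (h t θ * k t θ) := by
      have e1 : ∀ θ, (h t θ - k t θ) / h t θ = 1 - k t θ / h t θ := fun θ => by
        rw [sub_div, div_self (hpos t θ).ne']
      have e2 : ∀ θ, (h t θ - k t θ) ^ 2 / (h t θ * k t θ)
          = h t θ / k t θ + k t θ / h t θ - 2 := fun θ => by
        have h1 := (hpos t θ).ne'
        have h2 := (hkpos t θ).ne'
        field_simp
        ring
      rw [intervalIntegral.integral_congr (g := fun θ => 1 - k t θ / h t θ)
          (fun θ _ => e1 θ),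
        intervalIntegral.integral_congr
          (g := fun θ => h t θ / k t θ + k t θ / h t θ - 2) (fun θ _ => e2 θ),
        intervalIntegral.integral_sub (intervalIntegrable_const) (Ikh t),
        intervalIntegral.integral_sub ((Ihk t).add (Ikh t)) (intervalIntegrable_const),
        intervalIntegral.integral_add (Ihk t) (Ikh t),
        intervalIntegral.integral_const, intervalIntegral.integral_const, harea t]
      simp
      ring
    rw [hval] at hd
    rw [hwe]
    exact hd
  have hnonneg : ∀ t, 0 ≤ ∫ θ in (0:ℝ)..(2*π), (h t θ - k t θ) ^ 2 / (h t θ * k t θ) := by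
    intro t
    apply intervalIntegral.integral_nonneg hpi.le
    intro θ _
    have h1 := hpos t θ
    have h2 := hkpos t θ
    positivity
  refine ⟨fun t => ⟨main t, neg_nonpos.mpr (hnonneg t)⟩, ?_⟩
  have hdiff : Differentiable ℝ w := fun t => (main t).differentiableAt
  apply antitone_of_deriv_nonpos hdiff
  intro t
  rw [(main t).deriv]
  exact neg_nonpos.mpr (hnonneg t)
end

section
/- Let E(θ) = X(θ) + R(θ)N(θ) = h'(θ)T(θ) + (R(θ) - h(θ))N(θ) be the evolute of a strictly convex closed curve with support function h. Then E(θ+π) - E(θ) = f(θ)T(θ) + f'(θ)N(θ), where f(θ) = -(h'(θ+π)+h'(θ)) and f'(θ) = h(θ)+h(θ+π) - R(θ) - R(θ+π). In particular, θ₀ is a parabolic period-two orbit (f(θ₀) = f'(θ₀) = 0) if and only if E(θ₀+π) = E(θ₀). -/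
open Real

/-- unit tangent at tangent angle θ -/
noncomputable def Tvec (θ : ℝ) : ℝ × ℝ := (Real.cos θ, Real.sin θ)

/-- inward unit normal at tangent angle θ -/
noncomputable def Nvec (θ : ℝ) : ℝ × ℝ := (-Real.sin θ, Real.cos θ)

/-- For the evolute `E(θ) = X(θ) + R(θ)N(θ)` of a strictly convex closed curve with
support function `h` (where `R = h'' + h`), one has
`E(θ+π) - E(θ) = f(θ)T(θ) + f'(θ)N(θ)` where `f(θ) = -(h'(θ+π)+h'(θ))` and
`f'(θ) = h(θ)+h(θ+π) - R(θ) - R(θ+π)`. In particular, `θ₀` is a parabolic period-two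
orbit (`f(θ₀) = f'(θ₀) = 0`) if and only if `E(θ₀+π) = E(θ₀)`. -/
theorem evolute_and_parabolic_period_two
    (h R f fd : ℝ → ℝ) (X E : ℝ → ℝ × ℝ) (hh : ContDiff ℝ 2 h)
    (hR : ∀ θ, R θ = deriv (deriv h) θ + h θ)
    (hX : ∀ θ, X θ = deriv h θ • Tvec θ - h θ • Nvec θ)
    (hE : ∀ θ, E θ = X θ + R θ • Nvec θ)
    (hf : ∀ θ, f θ = -(deriv h (θ + π) + deriv h θ))
    (hfd : ∀ θ, fd θ = h θ + h (θ + π) - R θ - R (θ + π)) :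
    (∀ θ, E (θ + π) - E θ = f θ • Tvec θ + fd θ • Nvec θ) ∧
      (∀ θ₀, (f θ₀ = 0 ∧ fd θ₀ = 0) ↔ E (θ₀ + π) = E θ₀) := by
  have key : ∀ θ, E (θ + π) - E θ = f θ • Tvec θ + fd θ • Nvec θ := by
    intro θ
    simp only [hE, hX, hf, hfd, Tvec, Nvec, Real.cos_add_pi, Real.sin_add_pi,
      Prod.smul_mk, Prod.mk_add_mk, Prod.mk_sub_mk, smul_eq_mul, Prod.mk.injEq]
    constructor <;> ring
  refine ⟨key, fun θ₀ => ?_⟩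
  constructor
  · rintro ⟨h1, h2⟩
    have hk := key θ₀
    rw [h1, h2] at hk
    simpa using sub_eq_zero.mp (by simpa using hk)
  · intro hEq
    have hk := key θ₀
    rw [hEq, sub_self] at hk
    have h1 : f θ₀ * Real.cos θ₀ + fd θ₀ * (-Real.sin θ₀) = 0 := by
      have := congrArg Prod.fst hk.symm
      simpa [Tvec, Nvec, mul_comm] using this
    have h2 : f θ₀ * Real.sin θ₀ + fd θ₀ * Real.cos θ₀ = 0 := by
      have := congrArg Prod.snd hk.symm
      simpa [Tvec, Nvec, mul_comm] using this
    have hs : Real.sin θ₀ ^ 2 + Real.cos θ₀ ^ 2 = 1 := Real.sin_sq_add_cos_sq θ₀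
    constructor
    · linear_combination Real.cos θ₀ * h1 + Real.sin θ₀ * h2 - f θ₀ * hs
    · linear_combination (-Real.sin θ₀) * h1 + Real.cos θ₀ * h2 - fd θ₀ * hs
end

section
/- If a strictly convex closed curve has constant width (h(θ) + h(θ+π) = d for all θ) and moreover k'(θ) + k'(θ+π) = 0 for all θ, where k = 1/(h''+h) is the curvature, then k is constant, i.e., the curve is a circle. -/
open Real

/-- If a strictly convex closed curve has constant width (`h(θ) + h(θ+π) = d` for all
`θ`) and moreover `k'(θ) + k'(θ+π) = 0` for all `θ`, where `k = 1/(h''+h)` is the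
curvature, then `k` is constant, i.e. the curve is a circle. -/
theorem constant_width_with_curvature_condition_is_circle
    (h R k : ℝ → ℝ) (d : ℝ)
    (hh : ContDiff ℝ (⊤ : ℕ∞) h)
    (hper : ∀ θ, h (θ + 2 * π) = h θ)
    (hR : ∀ θ, R θ = deriv (deriv h) θ + h θ)
    (hRpos : ∀ θ, 0 < R θ)
    (hk : ∀ θ, k θ = (R θ)⁻¹)
    (hwidth : ∀ θ, h θ + h (θ + π) = d)
    (hk' : ∀ θ, deriv k θ + deriv k (θ + π) = 0) :
    ∀ θ₁ θ₂, k θ₁ = k θ₂ := by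
  have hh' : ContDiff ℝ (↑(⊤:ℕ∞)) h := hh.of_le (by simp)
  have hh1 : ContDiff ℝ (↑(⊤:ℕ∞)) (deriv h) := (contDiff_infty_iff_deriv.mp hh').2
  have hh2 : ContDiff ℝ (↑(⊤:ℕ∞)) (deriv (deriv h)) := (contDiff_infty_iff_deriv.mp hh1).2
  have hdh : Differentiable ℝ h := hh'.differentiable (by simp)
  have hdh1 : Differentiable ℝ (deriv h) := hh1.differentiable (by simp)
  have hdh2 : Differentiable ℝ (deriv (deriv h)) := hh2.differentiable (by simp)
  have hRfun : R = fun θ => deriv (deriv h) θ + h θ := funext hR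
  have hRdiff : Differentiable ℝ R := by rw [hRfun]; exact hdh2.add hdh
  have hRcont : Continuous R := hRdiff.continuous
  -- first derivative of the width identity
  have hd1 : ∀ θ, deriv h θ + deriv h (θ + π) = 0 := by
    intro θ
    have hu : (fun θ => h θ + h (θ + π)) = fun _ => d := funext hwidth
    have h1 : deriv (fun θ => h θ + h (θ + π)) θ
        = deriv h θ + deriv (fun x => h (x + π)) θ := by
      apply deriv_add (hdh θ)
      exact (hdh (θ + π)).comp θ (differentiableAt_id.add_const π)
    rw [hu] at h1
    simp only [deriv_const] at h1
    rw [deriv_comp_add_const] at h1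
    linarith
  -- second derivative of the width identity
  have hd2 : ∀ θ, deriv (deriv h) θ + deriv (deriv h) (θ + π) = 0 := by
    intro θ
    have hu : (fun θ => deriv h θ + deriv h (θ + π)) = fun _ => (0:ℝ) := funext hd1
    have h1 : deriv (fun θ => deriv h θ + deriv h (θ + π)) θ
        = deriv (deriv h) θ + deriv (fun x => deriv h (x + π)) θ := by
      apply deriv_add (hdh1 θ)
      exact (hdh1 (θ + π)).comp θ (differentiableAt_id.add_const π)
    rw [hu] at h1
    simp only [deriv_const] at h1
    rw [deriv_comp_add_const] at h1
    linarith
  -- constant width for the radius of curvature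
  have hRd : ∀ θ, R θ + R (θ + π) = d := by
    intro θ
    have := hd2 θ
    have := hwidth θ
    rw [hR θ, hR (θ + π)]
    linarith
  -- k is differentiable
  have hkfun : k = fun θ => (R θ)⁻¹ := funext hk
  have hkdiff : Differentiable ℝ k := by
    rw [hkfun]; exact hRdiff.inv (fun θ => (hRpos θ).ne')
  -- k θ + k (θ+π) is constant
  have hkc : ∀ θ, k θ + k (θ + π) = k 0 + k (0 + π) := by
    have hFdiff : Differentiable ℝ (fun θ => k θ + k (θ + π)) :=
      hkdiff.add (hkdiff.comp (differentiable_id.add_const π))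
    have hF0 : ∀ θ, deriv (fun θ => k θ + k (θ + π)) θ = 0 := by
      intro θ
      have h1 : deriv (fun θ => k θ + k (θ + π)) θ
          = deriv k θ + deriv (fun x => k (x + π)) θ := by
        apply deriv_add (hkdiff θ)
        exact (hkdiff (θ + π)).comp θ (differentiableAt_id.add_const π)
      rw [deriv_comp_add_const] at h1
      rw [h1, hk' θ]
    intro θ
    exact is_const_of_deriv_eq_zero hFdiff hF0 θ 0
  set c := k 0 + k (0 + π) with hc_def
  have hc : ∀ θ, (R θ)⁻¹ + (R (θ + π))⁻¹ = c := by
    intro θ; rw [← hk θ, ← hk (θ + π)]; exact hkc θ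
  have hcpos : 0 < c := by
    rw [← hc 0]
    have := hRpos 0; have := hRpos (0 + π)
    positivity
  have hdpos : 0 < d := by
    have := hRd 0; have := hRpos 0; have := hRpos (0 + π); linarith
  -- product identity: R θ * (d - R θ) = d / c
  have hprod : ∀ θ, R θ * (d - R θ) = d / c := by
    intro θ
    have h1 := hc θ
    have h2 := hRd θ
    have ha := hRpos θ
    have hb := hRpos (θ + π)
    have hb' : R (θ + π) = d - R θ := by linarith
    rw [hb'] at h1 hb
    field_simp at h1 ⊢
    nlinarith [h1]
  -- (R θ - d/2)^2 is constant
  have hsq : ∀ θ, (R θ - d / 2) ^ 2 = (d / 2) ^ 2 - d / c := by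
    intro θ
    have := hprod θ
    nlinarith [this]
  -- conclude R is constant via IVT
  have hRconst : ∀ θ₁ θ₂, R θ₁ = R θ₂ := by
    intro θ₁ θ₂
    by_contra hne
    set φ : ℝ → ℝ := fun θ => R θ - d / 2 with hφ_def
    have hφcont : Continuous φ := hRcont.sub continuous_const
    have hne' : φ θ₁ ≠ φ θ₂ := by
      simp only [hφ_def]; intro hcon; apply hne; linarith
    have hsq' : φ θ₁ ^ 2 = φ θ₂ ^ 2 := by rw [hsq θ₁, hsq θ₂]
    have hopp : φ θ₁ = -φ θ₂ := by
      rcases mul_eq_zero.mp (by nlinarith : (φ θ₁ - φ θ₂) * (φ θ₁ + φ θ₂) = 0) with h' | h'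
      · exact absurd (by linarith) hne'
      · linarith
    have hθ₁ne : φ θ₁ ≠ 0 := by
      intro h0; apply hne'; rw [h0]; rw [h0] at hopp; linarith
    have hmem : (0:ℝ) ∈ Set.uIcc (φ θ₁) (φ θ₂) := by
      rw [Set.mem_uIcc]
      rcases lt_trichotomy (φ θ₁) 0 with hlt | heq | hgt
      · left; constructor <;> [linarith; linarith [hopp]]
      · exact absurd heq hθ₁ne
      · right; constructor <;> [linarith [hopp]; linarith]
    obtain ⟨θ₀, _, hθ₀⟩ := intermediate_value_uIcc (hφcont.continuousOn) hmem
    have : φ θ₀ ^ 2 = φ θ₁ ^ 2 := by rw [hsq θ₀, hsq θ₁]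
    rw [hθ₀] at this
    have : φ θ₁ = 0 := by nlinarith
    exact hθ₁ne this
  intro θ₁ θ₂
  rw [hk θ₁, hk θ₂, hRconst θ₁ θ₂]
end

section
/- Let A₁: S¹ → S¹ be defined implicitly by the condition that X(A₁(θ)) is the second intersection of the inward normal line at X(θ) with the curve, i.e., ⟨X(A₁(θ)) - X(θ), T(θ)⟩ = 0 with A₁(θ) ≠ θ. Then A₁'(θ) = -(ℓ(θ) - R(θ))/(R(A₁(θ))⟨T(A₁(θ)), T(θ)⟩), where ℓ(θ) = ‖X(A₁(θ)) - X(θ)‖. In particular A₁'(θ) = 0 if and only if ℓ(θ) = R(θ), i.e., the point X(θ) + R(θ)N(θ) of the evolute lies on the curve. -/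
open Real

/-- planar dot product -/
def dot (v w : ℝ × ℝ) : ℝ := v.1 * w.1 + v.2 * w.2

/-- length of a planar vector -/
noncomputable def len (v : ℝ × ℝ) : ℝ := Real.sqrt (v.1 ^ 2 + v.2 ^ 2)

/-! Differentiating `⟨X(A₁ θ) - X θ, T θ⟩ = 0` with `X' = R T` and `T' = N` gives
`R(A₁ θ) A₁'(θ) ⟨T(A₁ θ), T θ⟩ - R θ + ⟨X(A₁ θ) - X θ, N θ⟩ = 0`, and the last inner product
is `ℓ θ` because the chord `X(A₁ θ) - X θ` is `ℓ θ N θ`. -/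

theorem HasDerivAt.dot {f g : ℝ → ℝ × ℝ} {f' g' : ℝ × ℝ} {x : ℝ}
    (hf : HasDerivAt f f' x) (hg : HasDerivAt g g' x) :
    HasDerivAt (fun t => dot (f t) (g t)) (dot f' (g x) + dot (f x) g') x := by
  have hfst {u : ℝ → ℝ × ℝ} {u'} (hu : HasDerivAt u u' x) : HasDerivAt (fun t => (u t).1) u'.1 x :=
    (ContinuousLinearMap.fst ℝ ℝ ℝ).hasFDerivAt.comp_hasDerivAt x hu
  have hsnd {u : ℝ → ℝ × ℝ} {u'} (hu : HasDerivAt u u' x) : HasDerivAt (fun t => (u t).2) u'.2 x :=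
    (ContinuousLinearMap.snd ℝ ℝ ℝ).hasFDerivAt.comp_hasDerivAt x hu
  refine (((hfst hf).mul (hfst hg)).add ((hsnd hf).mul (hsnd hg))).congr_deriv ?_
  simp only [_root_.dot]; ring

theorem hasDerivAt_Tvec (θ : ℝ) : HasDerivAt Tvec (Nvec θ) θ :=
  (Real.hasDerivAt_cos θ).prodMk (Real.hasDerivAt_sin θ)

theorem hasDerivAt_Nvec (θ : ℝ) : HasDerivAt Nvec (-Tvec θ) θ := by
  rw [Tvec, Prod.neg_mk]
  exact (Real.hasDerivAt_sin θ).neg.prodMk (Real.hasDerivAt_cos θ)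

theorem dot_Tvec_self (θ : ℝ) : dot (Tvec θ) (Tvec θ) = 1 := by
  simp only [dot, Tvec]; linear_combination Real.cos_sq_add_sin_sq θ

theorem dot_Nvec_Tvec (θ : ℝ) : dot (Nvec θ) (Tvec θ) = 0 := by
  simp only [dot, Nvec, Tvec]; ring

theorem dot_Nvec_self (θ : ℝ) : dot (Nvec θ) (Nvec θ) = 1 := by
  simp only [dot, Nvec]; linear_combination Real.sin_sq_add_cos_sq θ

theorem dot_smul_left (c : ℝ) (v w : ℝ × ℝ) : dot (c • v) w = c * dot v w := by
  simp only [dot, Prod.smul_fst, Prod.smul_snd, smul_eq_mul]; ring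

theorem dot_sub_left (u v w : ℝ × ℝ) : dot (u - v) w = dot u w - dot v w := by
  simp only [dot, Prod.fst_sub, Prod.snd_sub]; ring

theorem hasDerivAt_support_curve {h : ℝ → ℝ} (hh : ContDiff ℝ 2 h) (θ : ℝ) :
    HasDerivAt (fun t => deriv h t • Tvec t - h t • Nvec t)
      ((deriv (deriv h) θ + h θ) • Tvec θ) θ := by
  have hd : HasDerivAt h (deriv h θ) θ := (hh.differentiable two_ne_zero θ).hasDerivAt
  have hd' : HasDerivAt (deriv h) (deriv (deriv h) θ) θ :=
    (hh.differentiable_deriv_two θ).hasDerivAt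
  refine ((hd'.smul (hasDerivAt_Tvec θ)).sub (hd.smul (hasDerivAt_Nvec θ))).congr_deriv ?_
  ext <;> simp only [Tvec, Nvec, Prod.neg_mk, Prod.fst_sub, Prod.snd_sub, Prod.fst_add,
    Prod.snd_add, Prod.smul_fst, Prod.smul_snd, smul_eq_mul] <;> ring

theorem deriv_mul_eq_of_normal_return {X : ℝ → ℝ × ℝ} {R A ℓ : ℝ → ℝ} {θ : ℝ}
    (hX : ∀ t, HasDerivAt X (R t • Tvec t) t) (hA : DifferentiableAt ℝ A θ)
    (hnormal : ∀ t, X (A t) - X t = ℓ t • Nvec t) :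
    deriv A θ * (R (A θ) * dot (Tvec (A θ)) (Tvec θ)) = R θ - ℓ θ := by
  have hchord : HasDerivAt (fun t => X (A t) - X t)
      (deriv A θ • R (A θ) • Tvec (A θ) - R θ • Tvec θ) θ :=
    ((hX (A θ)).scomp θ hA.hasDerivAt).sub (hX θ)
  have hzero : (fun t => dot (X (A t) - X t) (Tvec t)) = fun _ => 0 := by
    funext t; rw [hnormal, dot_smul_left, dot_Nvec_Tvec, mul_zero]
  have hderiv := hchord.dot (hasDerivAt_Tvec θ)
  rw [hzero] at hderiv
  have hderiv_zero := hderiv.unique (hasDerivAt_const θ 0)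
  simp only [hnormal, dot_sub_left, dot_smul_left, dot_Tvec_self, dot_Nvec_self] at hderiv_zero
  linear_combination hderiv_zero

theorem normal_return_map_derivative_general
    (h R : ℝ → ℝ) (hh : ContDiff ℝ 2 h)
    (hR : ∀ θ, R θ = deriv (deriv h) θ + h θ)
    (hRpos : ∀ θ, 0 < R θ)
    (X : ℝ → ℝ × ℝ)
    (hX : ∀ θ, X θ = deriv h θ • Tvec θ - h θ • Nvec θ)
    (A₁ ℓ : ℝ → ℝ) (hA1 : Differentiable ℝ A₁)
    (hnormal : ∀ θ, X (A₁ θ) - X θ = ℓ θ • Nvec θ)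
    (htrans : ∀ θ, dot (Tvec (A₁ θ)) (Tvec θ) ≠ 0) :
    ∀ θ, deriv A₁ θ = -((ℓ θ - R θ) / (R (A₁ θ) * dot (Tvec (A₁ θ)) (Tvec θ))) ∧
      (deriv A₁ θ = 0 ↔ ℓ θ = R θ) := by
  have hX' (t : ℝ) : HasDerivAt X (R t • Tvec t) t := by
    rw [funext hX, hR]
    exact hasDerivAt_support_curve hh t
  intro θ
  have hkey := deriv_mul_eq_of_normal_return hX' (hA1 θ) hnormal
  have hden : R (A₁ θ) * dot (Tvec (A₁ θ)) (Tvec θ) ≠ 0 := mul_ne_zero (hRpos _).ne' (htrans θ)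
  refine ⟨?_, ?_⟩
  · rw [neg_div', eq_div_iff hden, hkey, neg_sub]
  · rw [← mul_eq_zero_iff_right hden, hkey, sub_eq_zero, eq_comm]

/-- Let `A₁` be the normal return map of a strictly convex closed curve: `X(A₁(θ))` is
the second intersection of the inward normal line at `X(θ)` with the curve, so that
`X(A₁(θ)) - X(θ) = ℓ(θ) N(θ)` with `ℓ(θ) = ‖X(A₁(θ)) - X(θ)‖ > 0`. Then
`A₁'(θ) = -(ℓ(θ) - R(θ))/(R(A₁(θ))⟨T(A₁(θ)), T(θ)⟩)`; in particular `A₁'(θ) = 0` if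
and only if `ℓ(θ) = R(θ)`, i.e. the evolute point `X(θ) + R(θ)N(θ)` lies on the
curve. -/
theorem normal_return_map_derivative
    (h R : ℝ → ℝ) (hh : ContDiff ℝ 2 h)
    (hR : ∀ θ, R θ = deriv (deriv h) θ + h θ)
    (hRpos : ∀ θ, 0 < R θ)
    (X : ℝ → ℝ × ℝ)
    (hX : ∀ θ, X θ = deriv h θ • Tvec θ - h θ • Nvec θ)
    (A₁ ℓ : ℝ → ℝ) (hA1 : Differentiable ℝ A₁)
    (hℓ : ∀ θ, ℓ θ = len (X (A₁ θ) - X θ))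
    (hℓpos : ∀ θ, 0 < ℓ θ)
    (hnormal : ∀ θ, X (A₁ θ) - X θ = ℓ θ • Nvec θ)
    (htrans : ∀ θ, dot (Tvec (A₁ θ)) (Tvec θ) ≠ 0) :
    ∀ θ, deriv A₁ θ = -((ℓ θ - R θ) / (R (A₁ θ) * dot (Tvec (A₁ θ)) (Tvec θ))) ∧
      (deriv A₁ θ = 0 ↔ ℓ θ = R θ) :=
  normal_return_map_derivative_general h R hh hR hRpos X hX A₁ ℓ hA1 hnormal htrans
end
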